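/- Let p ≥ 1, ξ ∈ C^p a unit vector, and 0 < ε < 1/5. Suppose v, ϑ ∈ C^p satisfy |v - (v·\bar{ξ})ξ| < ε|v·\bar{ξ}|, Re(ϑ·\bar{ξ}) ≥ 4/5, and |ϑ| ≤ (5ε)^{-1}. Then |v| ≤ 5|v·\bar{ϑ}|. -/

import Mathlib

open scoped ComplexInnerProductSpace in
/-- cone/test-vector lemma: if `ξ ∈ ℂ^p` is a unit vector, `0 < ε < 1/5`,
`v` lies in the `ε`-cone around `ξ` (`|v - (v·ξ̄)ξ| < ε|v·ξ̄|`), `Re(ϑ·ξ̄) ≥ 4/5` and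
`|ϑ| ≤ (5ε)⁻¹`, then `|v| ≤ 5 |v·ϑ̄|`.  (Here `v·ζ̄ = ⟪ζ, v⟫` in Mathlib's convention of an
inner product conjugate-linear in the first variable.) -/
theorem stmt18 (p : ℕ) (hp : 1 ≤ p) (ξ : EuclideanSpace ℂ (Fin p)) (hξ : ‖ξ‖ = 1)
    (ε : ℝ) (hε : 0 < ε) (hε' : ε < 1 / 5)
    (v ϑ : EuclideanSpace ℂ (Fin p))
    (hv : ‖v - (inner ℂ ξ v : ℂ) • ξ‖ < ε * ‖(inner ℂ ξ v : ℂ)‖)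
    (hϑ1 : (4 : ℝ) / 5 ≤ ((inner ℂ ξ ϑ : ℂ)).re)
    (hϑ2 : ‖ϑ‖ ≤ (5 * ε)⁻¹) :
    ‖v‖ ≤ 5 * ‖(inner ℂ ϑ v : ℂ)‖ := by
  set a : ℂ := inner ℂ ξ v with ha
  set w : EuclideanSpace ℂ (Fin p) := v - a • ξ with hw
  have hwa : ‖w‖ < ε * ‖a‖ := hv
  -- the inner product ⟪ϑ, ξ⟫ has norm at least 4/5
  have h1 : (4:ℝ)/5 ≤ ‖(inner ℂ ϑ ξ : ℂ)‖ := by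
    have hre : ((inner ℂ ϑ ξ : ℂ)).re = ((inner ℂ ξ ϑ : ℂ)).re := by
      rw [← inner_conj_symm ξ ϑ, Complex.conj_re]
    calc (4:ℝ)/5 ≤ ((inner ℂ ϑ ξ : ℂ)).re := by rw [hre]; exact hϑ1
    _ ≤ ‖(inner ℂ ϑ ξ : ℂ)‖ := Complex.re_le_norm _
    _ = ‖(inner ℂ ϑ ξ : ℂ)‖ := rfl
  -- the error term is small
  have h2 : ‖(inner ℂ ϑ w : ℂ)‖ ≤ ‖a‖ / 5 := by
    calc ‖(inner ℂ ϑ w : ℂ)‖ ≤ ‖ϑ‖ * ‖w‖ := norm_inner_le_norm _ _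
    _ ≤ (5*ε)⁻¹ * (ε * ‖a‖) := by
        exact mul_le_mul hϑ2 hwa.le (norm_nonneg _) (by positivity)
    _ = ‖a‖ / 5 := by field_simp
  have hsplit : (inner ℂ ϑ v : ℂ) = a * (inner ℂ ϑ ξ : ℂ) + (inner ℂ ϑ w : ℂ) := by
    rw [hw, inner_sub_right, inner_smul_right]
    ring
  have key : ‖a * (inner ℂ ϑ ξ : ℂ)‖ - ‖(inner ℂ ϑ w : ℂ)‖ ≤ ‖(inner ℂ ϑ v : ℂ)‖ := by
    rw [hsplit]
    have h := norm_add_le (a * (inner ℂ ϑ ξ : ℂ) + (inner ℂ ϑ w : ℂ)) (-(inner ℂ ϑ w : ℂ))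
    simp only [add_neg_cancel_right, norm_neg] at h
    linarith
  have h3 : (3:ℝ)/5 * ‖a‖ ≤ ‖(inner ℂ ϑ v : ℂ)‖ := by
    have h4 : (4:ℝ)/5 * ‖a‖ ≤ ‖a * (inner ℂ ϑ ξ : ℂ)‖ := by
      rw [norm_mul]
      nlinarith [norm_nonneg a]
    linarith
  have h5 : ‖v‖ ≤ 3 * ‖a‖ := by
    have : ‖v‖ ≤ ‖a • ξ‖ + ‖w‖ := by
      have := norm_add_le (a • ξ) w
      simpa [hw] using this
    rw [norm_smul, hξ, mul_one] at this
    nlinarith [norm_nonneg a, norm_nonneg w]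
  linarith
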